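/- Let n ≥ 1 and 0 ≤ t ≤ C(n,2) be integers. Then I_n(t) = C(n+t, t) − C(n+t−1, t−1) + ∑_{j=1}^{n} ∑_{k=C(j+1,2)}^{C(n+1,2)} (−1)^j · D(n,j,k) · ( C₀(t − k + n, n) − C₀(t − k + n − 1, n) ), where D(n,j,k) is the number of j-element subsets of {1,…,n} whose elements sum to k, and C₀(a,b) denotes the restricted binomial coefficient which equals C(a,b) when a ≥ b and 0 otherwise. -/

import Mathlib

/-- The number of inversions of a permutation of `Fin n`. -/
def invCount {n : ℕ} (π : Equiv.Perm (Fin n)) : ℕ :=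
  ((Finset.univ : Finset (Fin n × Fin n)).filter
    (fun p => p.1 < p.2 ∧ π p.2 < π p.1)).card

/-- `I n t`: the number of permutations of `{1,…,n}` with exactly `t` inversions. -/
def invNum (n t : ℕ) : ℕ :=
  ((Finset.univ : Finset (Equiv.Perm (Fin n))).filter (fun π => invCount π = t)).card

/-- `D n j k`: the number of `j`-element subsets of `{1,…,n}` whose elements sum to `k`. -/
def subsetSumCount (n j k : ℕ) : ℕ :=
  ((Finset.powersetCard j (Finset.Icc 1 n)).filter (fun s => ∑ i ∈ s, i = k)).card

/-- Restricted binomial coefficient: `C₀(a,b) = C(a,b)` when `a ≥ b`, and `0` otherwise.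
Here also `b` is an integer; the value is `0` when `b < 0`. -/
def C0 (a : ℤ) (b : ℤ) : ℤ :=
  if 0 ≤ b ∧ b ≤ a then ((a.toNat).choose b.toNat : ℤ) else 0


/-!
Prepending a value `p` to a permutation of `Fin n` (relabelling the remaining values around `p`)
creates exactly `p` new inversions, so `∑_π x ^ inv π = ∏_{i=1}^n (1 + x + ⋯ + x ^ (i - 1))`.
Multiplying by `(1 - x) ^ n` gives `∏_{i=1}^n (1 - x ^ i) = ∑_{S ⊆ [n]} (-1) ^ |S| x ^ (∑ S)`.
Dividing back, the coefficient of `x ^ t` in `x ^ k / (1 - x) ^ n = x ^ k (1 - x) / (1 - x) ^ (n + 1)`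
is `C₀(t - k + n, n) - C₀(t - k + n - 1, n)`. Grouping the subsets `S` by size `j` and sum `k`
gives the formula; the empty set yields the first term.
-/

open Finset
open Equiv (Perm)

section Insertion

variable {n : ℕ}

def permCons (p : Fin (n + 1)) (e : Perm (Fin n)) : Perm (Fin (n + 1)) :=
  (finSuccEquiv n).trans (e.optionCongr.trans (finSuccEquiv' p).symm)

@[simp] lemma permCons_zero (p : Fin (n + 1)) (e : Perm (Fin n)) : permCons p e 0 = p := by
  simp [permCons]

@[simp] lemma permCons_succ (p : Fin (n + 1)) (e : Perm (Fin n)) (i : Fin n) :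
    permCons p e i.succ = p.succAbove (e i) := by
  simp [permCons]

lemma permCons_injective :
    Function.Injective fun x : Fin (n + 1) × Perm (Fin n) ↦ permCons x.1 x.2 := by
  rintro ⟨p, e⟩ ⟨q, f⟩ h
  obtain rfl : p = q := by simpa using congr($h 0)
  refine Prod.ext rfl (Equiv.ext fun i ↦ ?_)
  simpa using congr($h i.succ)

variable (n) in
noncomputable def permConsEquiv : Fin (n + 1) × Perm (Fin n) ≃ Perm (Fin (n + 1)) :=
  Equiv.ofBijective _ ((Fintype.bijective_iff_injective_and_card _).2
    ⟨permCons_injective, by simp [Fintype.card_perm, Nat.factorial_succ]⟩)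

lemma invCount_eq_sum (π : Perm (Fin n)) :
    invCount π = ∑ i, ∑ j, if i < j ∧ π j < π i then 1 else 0 := by
  rw [invCount, card_filter, Fintype.sum_prod_type]

lemma sum_ite_castSucc_lt (p : Fin (n + 1)) :
    ∑ j : Fin n, (if j.castSucc < p then 1 else 0) = (p : ℕ) := by
  have h := Fin.sum_univ_castSucc fun i : Fin (n + 1) ↦ if i < p then 1 else 0
  rw [if_neg (Fin.le_last p).not_gt, add_zero, ← card_filter, filter_gt_eq_Iio, Fin.card_Iio] at h
  exact h.symm

lemma invCount_permCons (p : Fin (n + 1)) (e : Perm (Fin n)) :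
    invCount (permCons p e) = p + invCount e := by
  simp only [invCount_eq_sum, Fin.sum_univ_succ, permCons_zero, permCons_succ, Fin.succ_pos,
    Fin.succ_lt_succ_iff, Fin.succAbove_lt_succAbove_iff, Fin.succAbove_lt_iff_castSucc_lt,
    Fin.not_lt_zero, false_and, true_and, if_false, zero_add]
  rw [Equiv.sum_comp e fun j ↦ if j.castSucc < p then 1 else 0, sum_ite_castSucc_lt]

end Insertion

section GeneratingFunction

variable {R : Type*}

lemma sum_pow_invCount_succ [CommSemiring R] (x : R) (n : ℕ) :
    ∑ σ : Perm (Fin (n + 1)), x ^ invCount σ =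
      (∑ m ∈ range (n + 1), x ^ m) * ∑ e : Perm (Fin n), x ^ invCount e := by
  rw [← (permConsEquiv n).sum_comp, Fintype.sum_prod_type, ← Fin.sum_univ_eq_sum_range,
    sum_mul_sum]
  simp [permConsEquiv, invCount_permCons, pow_add]

theorem sum_pow_invCount [CommSemiring R] (x : R) (n : ℕ) :
    ∑ π : Perm (Fin n), x ^ invCount π = ∏ i ∈ Icc 1 n, ∑ m ∈ range i, x ^ m := by
  induction n with
  | zero => simp [invCount]
  | succ n ih => rw [sum_pow_invCount_succ, ih, prod_Icc_succ_top (by omega), mul_comm]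

lemma prod_one_sub_pow [CommRing R] (x : R) (s : Finset ℕ) :
    ∏ i ∈ s, (1 - x ^ i) = ∑ t ∈ s.powerset, (-1) ^ #t * x ^ ∑ i ∈ t, i := by
  calc ∏ i ∈ s, (1 - x ^ i) = ∏ i ∈ s, (1 + (-1) * x ^ i) :=
        prod_congr rfl fun i _ ↦ by ring
    _ = _ := by simp_rw [prod_one_add, prod_mul_distrib, prod_const, ← prod_pow_eq_pow_sum]

lemma one_sub_pow_mul_sum_pow_invCount [CommRing R] (x : R) (n : ℕ) :
    (1 - x) ^ n * ∑ π : Perm (Fin n), x ^ invCount π =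
      ∑ s ∈ (Icc 1 n).powerset, (-1) ^ #s * x ^ ∑ i ∈ s, i := by
  have hpow : (1 - x) ^ n = ∏ _i ∈ Icc 1 n, (1 - x) := by simp
  rw [sum_pow_invCount, hpow, ← prod_mul_distrib, ← prod_one_sub_pow]
  exact prod_congr rfl fun i _ ↦ mul_neg_geom_sum x i

end GeneratingFunction

lemma C0_natCast (a b : ℕ) : C0 a b = a.choose b := by
  rcases le_or_gt b a with h | h
  · simp [C0, h]
  · simp [C0, Nat.choose_eq_zero_of_lt h, h.not_ge]

lemma C0_of_lt {a b : ℤ} (h : a < b) : C0 a b = 0 := by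
  rw [C0, if_neg (by omega)]

lemma C0_of_neg {a b : ℤ} (h : b < 0) : C0 a b = 0 := by
  rw [C0, if_neg (by omega)]

lemma choose_sub_C0_eq (n t : ℕ) :
    ((n + t).choose t : ℤ) - C0 ((n : ℤ) + t - 1) ((t : ℤ) - 1) =
      C0 ((t : ℤ) + n) n - C0 ((t : ℤ) + n - 1) n := by
  cases t with
  | zero => simp [C0_of_neg, C0_of_lt, C0_natCast]
  | succ t =>
    rw [show (n : ℤ) + (t + 1 : ℕ) - 1 = (n + t : ℕ) by push_cast; ring,
      show ((t + 1 : ℕ) : ℤ) - 1 = t by push_cast; ring,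
      show ((t + 1 : ℕ) : ℤ) + n = (n + (t + 1) : ℕ) by push_cast; ring,
      show ((n + (t + 1) : ℕ) : ℤ) - 1 = (n + t : ℕ) by push_cast; ring,
      C0_natCast, C0_natCast, C0_natCast, Nat.choose_symm_add, Nat.choose_symm_add]

section PowerSeries

open PowerSeries

lemma coeff_one_sub_X_mul_mk_choose (n m : ℕ) :
    coeff m ((1 - X) * PowerSeries.mk fun i ↦ ((n + i).choose n : ℤ)) =
      C0 (m + n : ℕ) n - C0 ((m + n : ℕ) - 1) n := by
  cases m with
  | zero => simp [C0_natCast, C0_of_lt]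
  | succ m =>
    rw [sub_mul, one_mul, map_sub, coeff_succ_X_mul, coeff_mk, coeff_mk,
      show ((m + 1 + n : ℕ) : ℤ) - 1 = (m + n : ℕ) by push_cast; ring, C0_natCast, C0_natCast]
    ring_nf

lemma coeff_X_pow_mul_one_sub_X_mul_mk_choose (n t k : ℕ) :
    coeff t (X ^ k * ((1 - X) * PowerSeries.mk fun i ↦ ((n + i).choose n : ℤ))) =
      C0 ((t : ℤ) - k + n) n - C0 ((t : ℤ) - k + n - 1) n := by
  rw [coeff_X_pow_mul']
  split_ifs with hk
  · obtain ⟨m, rfl⟩ := Nat.exists_eq_add_of_le hk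
    rw [coeff_one_sub_X_mul_mk_choose, Nat.add_sub_cancel_left,
      show ((k + m : ℕ) : ℤ) - k + n = (m + n : ℕ) by push_cast; ring]
  · rw [C0_of_lt (by omega), C0_of_lt (by omega), sub_zero]

lemma coeff_sum_X_pow_invCount (n t : ℕ) :
    coeff t (∑ π : Perm (Fin n), (X : ℤ⟦X⟧) ^ invCount π) = invNum n t := by
  simp only [map_sum, coeff_X_pow, invNum, card_filter, eq_comm]
  push_cast
  rfl

/-- `(1 - X)⁻¹ ^ n` is written as `(1 - X) * (1 - X)⁻¹ ^ (n + 1)`, whose coefficients are given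
by the same binomial formula for every `n`, including `n = 0`. -/
lemma sum_X_pow_invCount_eq (n : ℕ) :
    ∑ π : Perm (Fin n), (X : ℤ⟦X⟧) ^ invCount π =
      (∑ s ∈ (Icc 1 n).powerset, (-1) ^ #s * X ^ ∑ i ∈ s, i) *
        ((1 - X) * PowerSeries.mk fun i ↦ ((n + i).choose n : ℤ)) := by
  rw [← one_sub_pow_mul_sum_pow_invCount]
  calc _ = (∑ π : Perm (Fin n), (X : ℤ⟦X⟧) ^ invCount π) *
        ((PowerSeries.mk fun i ↦ ((n + i).choose n : ℤ)) * (1 - X) ^ (n + 1)) := by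
          rw [mk_add_choose_mul_one_sub_pow_eq_one, mul_one]
    _ = _ := by ring

lemma invNum_eq_sum_powerset (n t : ℕ) :
    (invNum n t : ℤ) = ∑ s ∈ (Icc 1 n).powerset, (-1) ^ #s *
      (C0 ((t : ℤ) - (∑ i ∈ s, i : ℕ) + n) n - C0 ((t : ℤ) - (∑ i ∈ s, i : ℕ) + n - 1) n) := by
  rw [← coeff_sum_X_pow_invCount, sum_X_pow_invCount_eq, sum_mul, map_sum]
  refine sum_congr rfl fun s _ ↦ ?_
  rw [show (-1 : ℤ⟦X⟧) ^ #s = C ((-1) ^ #s) by simp, mul_assoc, coeff_C_mul,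
    coeff_X_pow_mul_one_sub_X_mul_mk_choose]

end PowerSeries

lemma choose_card_succ_two_le_sum {s : Finset ℕ} (hs : 0 ∉ s) :
    (#s + 1).choose 2 ≤ ∑ i ∈ s, i := by
  induction s using Finset.induction_on_max with
  | empty => simp
  | insert a s hlt ih =>
    have ha : a ∉ s := fun h ↦ lt_irrefl a (hlt a h)
    have h0 : 0 ∉ s := fun h ↦ hs (mem_insert_of_mem h)
    have hsub : s ⊆ Ioo 0 a := fun x hx ↦
      mem_Ioo.2 ⟨Nat.pos_of_ne_zero (ne_of_mem_of_not_mem hx h0), hlt x hx⟩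
    have hcard : #s + 1 ≤ a := by
      have hle := card_le_card hsub
      have ha0 : a ≠ 0 := fun h ↦ hs (h ▸ mem_insert_self a s)
      rw [Nat.card_Ioo] at hle
      omega
    rw [card_insert_of_notMem ha, sum_insert ha,
      show (#s + 1 + 1).choose 2 = (#s + 1).choose 1 + (#s + 1).choose 2 from
        Nat.choose_succ_succ _ _, Nat.choose_one_right]
    have := ih h0
    omega

lemma sum_le_choose_succ_two {n : ℕ} {s : Finset ℕ} (hs : s ⊆ Icc 1 n) :
    ∑ i ∈ s, i ≤ (n + 1).choose 2 := by
  have hrange : s ⊆ range (n + 1) := fun x hx ↦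
    mem_range.2 (Nat.lt_succ_of_le (mem_Icc.1 (hs hx)).2)
  calc ∑ i ∈ s, i ≤ ∑ i ∈ range (n + 1), i := sum_le_sum_of_subset hrange
    _ = (n + 1).choose 2 := by rw [sum_range_id, Nat.choose_two_right]

lemma sum_subsetSumCount_smul {M : Type*} [AddCommMonoid M] (n j : ℕ) (f : ℕ → M) :
    ∑ k ∈ Icc ((j + 1).choose 2) ((n + 1).choose 2), subsetSumCount n j k • f k =
      ∑ s ∈ powersetCard j (Icc 1 n), f (∑ i ∈ s, i) := by
  have hmaps : ∀ s ∈ powersetCard j (Icc 1 n),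
      ∑ i ∈ s, i ∈ Icc ((j + 1).choose 2) ((n + 1).choose 2) := fun s hs ↦ by
    obtain ⟨hsub, rfl⟩ := mem_powersetCard.1 hs
    exact mem_Icc.2 ⟨choose_card_succ_two_le_sum fun h ↦ by simpa using hsub h,
      sum_le_choose_succ_two hsub⟩
  rw [← sum_fiberwise_of_maps_to hmaps]
  refine sum_congr rfl fun k _ ↦ ?_
  rw [subsetSumCount, ← sum_const]
  exact sum_congr rfl fun s hs ↦ by rw [(mem_filter.1 hs).2]

lemma sum_powerset_eq_sum_range_sum_powersetCard {α M : Type*} [AddCommMonoid M] (s : Finset α)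
    (f : Finset α → M) :
    ∑ t ∈ s.powerset, f t = ∑ j ∈ range (#s + 1), ∑ t ∈ powersetCard j s, f t := by
  rw [← sum_fiberwise_of_maps_to (g := card) fun t ht ↦
    mem_range.2 (Nat.lt_succ_of_le (card_le_card (mem_powerset.1 ht)))]
  simp_rw [powersetCard_eq_filter]

theorem invNum_eq_general (n t : ℕ) :
    (invNum n t : ℤ) =
      ((n + t).choose t : ℤ) - C0 ((n : ℤ) + t - 1) ((t : ℤ) - 1) +
        ∑ j ∈ Finset.Icc 1 n, ∑ k ∈ Finset.Icc ((j + 1).choose 2) ((n + 1).choose 2),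
          (-1) ^ j * (subsetSumCount n j k : ℤ) *
            (C0 ((t : ℤ) - k + n) n - C0 ((t : ℤ) - k + n - 1) n) := by
  have hrange : range (n + 1) = insert 0 (Icc 1 n) := by
    ext; simp only [mem_range, mem_insert, mem_Icc]; omega
  rw [invNum_eq_sum_powerset, sum_powerset_eq_sum_range_sum_powersetCard, Nat.card_Icc,
    Nat.add_sub_cancel, hrange, sum_insert (by simp), choose_sub_C0_eq]
  congr 1
  · simp
  · refine sum_congr rfl fun j _ ↦ ?_
    simp_rw [mul_comm ((-1 : ℤ) ^ j), mul_assoc, ← nsmul_eq_mul, sum_subsetSumCount_smul]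
    exact sum_congr rfl fun s hs ↦ by rw [(mem_powersetCard.1 hs).2]

theorem invNum_eq (n t : ℕ) (hn : 1 ≤ n) (ht : t ≤ n.choose 2) :
    (invNum n t : ℤ) =
      ((n + t).choose t : ℤ) - C0 ((n : ℤ) + t - 1) ((t : ℤ) - 1) +
        ∑ j ∈ Finset.Icc 1 n, ∑ k ∈ Finset.Icc ((j + 1).choose 2) ((n + 1).choose 2),
          (-1) ^ j * (subsetSumCount n j k : ℤ) *
            (C0 ((t : ℤ) - k + n) n - C0 ((t : ℤ) - k + n - 1) n) :=
  invNum_eq_general n t
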